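/- Let π: G → G' be a covering homomorphism of connected Lie groups (i.e., a surjective homomorphism with discrete kernel) and C a conjugacy class in G. Then π(Γ_G(C)) = Γ_{G'}(π(C)). -/

import Mathlib

open Manifold Set Polynomial

noncomputable section

/-- A conjugacy class in a group: the set of elements conjugate to some fixed element. -/
def IsConjClass {G : Type*} [Group G] (C : Set G) : Prop :=
  ∃ a : G, C = {b : G | IsConj a b}

variable (E : Type*) [NormedAddCommGroup E] [NormedSpace ℝ E] [FiniteDimensional ℝ E]
variable (G : Type*) [TopologicalSpace G] [ChartedSpace E G] [Group G] [LieGroup 𝓘(ℝ, E) (⊤ : ℕ∞) G]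

/-- The adjoint representation of the Lie group `G` on its Lie algebra `𝔤`, which is identified
with the tangent space `E` of `G` at the identity: `Ad g` is the differential at `1` of the
conjugation map `x ↦ g * x * g⁻¹`. -/
def Ad (g : G) : E →L[ℝ] E :=
  mfderiv 𝓘(ℝ, E) 𝓘(ℝ, E) (fun x : G => g * x * g⁻¹) 1

/-- An element `g` of a Lie group is `Ad`-semisimple if `Ad g` is a semisimple linear
endomorphism of the Lie algebra (equivalently, `Ad g` is diagonalizable over `ℂ`). -/
def IsAdSemisimple (g : G) : Prop :=
  Module.End.IsSemisimple (R := ℝ) (M := E) (Ad E G g).toLinearMap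

/-- An `Ad`-semisimple conjugacy class in `G`: a conjugacy class some (equivalently, every)
element of which is `Ad`-semisimple. -/
def IsAdSemisimpleConjClass (C : Set G) : Prop :=
  ∃ a : G, C = {b : G | IsConj a b} ∧ IsAdSemisimple E G a

variable (E' : Type*) [NormedAddCommGroup E'] [NormedSpace ℝ E'] [FiniteDimensional ℝ E']
variable (H : Type*) [TopologicalSpace H] [ChartedSpace E' H] [Group H] [LieGroup 𝓘(ℝ, E') (⊤ : ℕ∞) H]

/-- Let `π : G → G'` be a covering homomorphism of connected Lie groups
(a smooth surjective homomorphism with discrete kernel) and `C` a conjugacy class in `G`. Then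
`π(Γ_G(C)) = Γ_{G'}(π(C))`, where `Γ_G(C) = g⁻¹C ∩ Z(G)` for any `g ∈ C`. -/
theorem stmt_17 [ConnectedSpace G] [ConnectedSpace H] (π : G →* H)
    (hπ : ContMDiff 𝓘(ℝ, E) 𝓘(ℝ, E') (⊤ : ℕ∞) π) (hsurj : Function.Surjective π)
    (hker : DiscreteTopology π.ker)
    (C : Set G) (hC : IsConjClass C) (g : G) (hg : g ∈ C) :
    π '' (((fun c => g⁻¹ * c) '' C) ∩ (Subgroup.center G : Set G))
      = ((fun c => (π g)⁻¹ * c) '' (π '' C)) ∩ (Subgroup.center H : Set H) := by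
  have hcont : Continuous π := hπ.continuous
  ext y
  constructor
  · rintro ⟨u, ⟨⟨c, hc, rfl⟩, hz⟩, rfl⟩
    refine ⟨⟨π c, ⟨c, hc, rfl⟩, by simp⟩, ?_⟩
    rw [SetLike.mem_coe, Subgroup.mem_center_iff]
    intro h
    obtain ⟨x, rfl⟩ := hsurj h
    simp only
    rw [← map_mul, ← map_mul, Subgroup.mem_center_iff.mp hz x]
  · rintro ⟨⟨_, ⟨c, hc, rfl⟩, rfl⟩, hz⟩
    simp only [SetLike.mem_coe] at hz
    set u := g⁻¹ * c with hu
    have hzu : π u ∈ Subgroup.center H := by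
      simpa [u, map_mul] using hz
    have hmem : ∀ x : G, x * u * x⁻¹ * u⁻¹ ∈ π.ker := by
      intro x
      rw [MonoidHom.mem_ker]
      have hcomm : π x * π u = π u * π x := Subgroup.mem_center_iff.mp hzu (π x)
      simp only [map_mul, map_inv]
      rw [mul_assoc (π x * π u), ← mul_inv_rev, hcomm, mul_inv_cancel]
    haveI : IsTopologicalGroup G := topologicalGroup_of_lieGroup 𝓘(ℝ, E) (⊤ : ℕ∞) (G := G)
    let f : G → π.ker := fun x => ⟨x * u * x⁻¹ * u⁻¹, hmem x⟩
    have hfc : Continuous f := by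
      apply Continuous.subtype_mk
      exact ((continuous_id.mul continuous_const).mul continuous_inv).mul continuous_const
    have hconst : f = fun _ => f 1 :=
      (IsLocallyConstant.iff_continuous f).mpr hfc |>.eq_const 1
    have hcen : u ∈ Subgroup.center G := by
      rw [Subgroup.mem_center_iff]
      intro x
      have h0 := congrArg Subtype.val (congrFun hconst x)
      have h1 : x * u * x⁻¹ * u⁻¹ = 1 := by simpa [f] using h0
      calc x * u = (x * u * x⁻¹ * u⁻¹) * (u * x) := by group
        _ = u * x := by rw [h1, one_mul]
    exact ⟨u, ⟨⟨c, hc, rfl⟩, hcen⟩, by simp [u]⟩
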